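/- Let G, M be abelian groups and (h, c) an abelian 3-cocycle on G with values in M, with trace q(x) := c(x,x). Then q(x) + q(-x) = c(x,x) + c(x,x) = 2q(x), and q(-x) = q(x) for all x ∈ G. -/

import Mathlib

/-!
Evaluating the hexagon identities at `(x, -x, x)` and `(-x, x, -x)` expresses `c(x,x)` and
`c(-x,-x)` through `h(x,-x,x)`, `h(-x,x,-x)` and the common term `c(-x,x)`; the cocycle identity
at `(x, -x, x, -x)` says that these two values of `h` are opposite, which forces
`c(-x,-x) = c(x,x)`.
-/

section

variable {G M : Type*} [AddCommGroup G] [AddCommGroup M]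

structure IsNormalized3Cocycle (h : G → G → G → M) : Prop where
  cocycle : ∀ u x y z : G,
    h x y z + h u (x + y) z + h u x y = h u x (y + z) + h (u + x) y z
  apply_zero_mid : ∀ x z : G, h x 0 z = 0

structure IsAbelian3Cocycle (h : G → G → G → M) (c : G → G → M) : Prop
    extends IsNormalized3Cocycle h where
  hexagon : ∀ x y z : G, h y z x + c x (y + z) + h x y z = c x z + h y x z + c x y
  hexagon' : ∀ x y z : G, -h z x y + c (x + y) z - h x y z = c x z - h x z y + c y z

namespace IsNormalized3Cocycle

variable {h : G → G → G → M} (hh : IsNormalized3Cocycle h)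
include hh

theorem apply_zero_right (u x : G) : h u x 0 = 0 := by
  simpa [hh.apply_zero_mid] using hh.cocycle u x 0 0

theorem apply_zero_left (y z : G) : h 0 y z = 0 := by
  simpa [hh.apply_zero_mid] using hh.cocycle 0 0 y z

theorem apply_neg_add_apply (x : G) : h (-x) x (-x) + h x (-x) x = 0 := by
  simpa [hh.apply_zero_mid, hh.apply_zero_right, hh.apply_zero_left] using
    hh.cocycle x (-x) x (-x)

end IsNormalized3Cocycle

namespace IsAbelian3Cocycle

variable {h : G → G → G → M} {c : G → G → M} (hc : IsAbelian3Cocycle h c)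
include hc

theorem zero_left (z : G) : c 0 z = 0 := by
  simpa [hc.apply_zero_mid, hc.apply_zero_left, hc.apply_zero_right] using hc.hexagon' 0 0 z

theorem zero_right (z : G) : c z 0 = 0 := by
  simpa [hc.apply_zero_mid, hc.apply_zero_left, hc.apply_zero_right] using hc.hexagon z 0 0

theorem diag_neg (x : G) : c (-x) (-x) = c x x := by
  have e₁ := hc.hexagon' x (-x) x
  have e₂ := hc.hexagon (-x) x (-x)
  have e₃ := hc.apply_neg_add_apply x
  rw [add_neg_cancel, hc.zero_left] at e₁
  rw [add_neg_cancel, hc.zero_right] at e₂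
  linear_combination (norm := module) e₁ - e₂ + e₃

end IsAbelian3Cocycle

end

/-- For an abelian 3-cocycle `(h, c)` with trace `q(x) := c(x,x)`:
`q(x) + q(-x) = c(x,x) + c(x,x) = 2q(x)` and `q(-x) = q(x)`. -/
theorem stmt_12 {G M : Type*} [AddCommGroup G] [AddCommGroup M]
    (h : G → G → G → M) (c : G → G → M)
    (hcoc : ∀ u x y z : G,
      h x y z + h u (x + y) z + h u x y = h u x (y + z) + h (u + x) y z)
    (hnorm : ∀ x z : G, h x 0 z = 0)
    (hA : ∀ x y z : G,
      h y z x + c x (y + z) + h x y z = c x z + h y x z + c x y)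
    (hA' : ∀ x y z : G,
      -h z x y + c (x + y) z - h x y z = c x z - h x z y + c y z) :
    ∀ x : G,
      c x x + c (-x) (-x) = c x x + c x x ∧
      c x x + c (-x) (-x) = (2 : ℤ) • c x x ∧
      c (-x) (-x) = c x x := by
  intro x
  have hq : c (-x) (-x) = c x x := IsAbelian3Cocycle.diag_neg ⟨⟨hcoc, hnorm⟩, hA, hA'⟩ x
  exact ⟨by rw [hq], by rw [hq, two_zsmul], hq⟩
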